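/- arXiv:1812.07186 — 2 statements merged into one kernel-verified Lean document; each statement's English description precedes it below -/
import Mathlib

section
/- For any matrix P ∈ ℝ^{m×m} and bounded measurable functions Q₁ : [a,b] → ℝ^{m×n}, Q₂ : [a,b] → ℝ^{n×m}, S : [a,b] → ℝ^{n×n}, R₁, R₂ : [a,b]×[a,b] → ℝ^{n×n}, define P̂ = Pᵀ, Q̂₁(s) = Q₂(s)ᵀ, Q̂₂(s) = Q₁(s)ᵀ, Ŝ(s) = S(s)ᵀ, R̂₁(s,η) = R₂(η,s)ᵀ, R̂₂(s,η) = R₁(η,s)ᵀ. Then for all (x₁,x₂), (y₁,y₂) ∈ ℝ^m × L²([a,b];ℝ^n), ⟨(x₁,x₂), 𝒫_{P,Q₁,Q₂,S,R₁,R₂}(y₁,y₂)⟩_X = ⟨𝒫_{P̂,Q̂₁,Q̂₂,Ŝ,R̂₁,R̂₂}(x₁,x₂), (y₁,y₂)⟩_X; that is, 𝒫_{P̂,Q̂₁,Q̂₂,Ŝ,R̂₁,R̂₂} is the adjoint of 𝒫_{P,Q₁,Q₂,S,R₁,R₂} with respect to ⟨·,·⟩_X. -/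
open MeasureTheory Matrix Set

noncomputable section

/-- The operator `𝒫_{P,Q₁,Q₂,S,R₁,R₂}` on `ℝ^m × L²([a,b];ℝⁿ)`, applied to a pair
`u = (x, z)`.  All integrals are taken entrywise. -/
def Pop (a b : ℝ) {m n : ℕ}
    (P : Matrix (Fin m) (Fin m) ℝ)
    (Q1 : ℝ → Matrix (Fin m) (Fin n) ℝ)
    (Q2 : ℝ → Matrix (Fin n) (Fin m) ℝ)
    (S : ℝ → Matrix (Fin n) (Fin n) ℝ)
    (R1 R2 : ℝ → ℝ → Matrix (Fin n) (Fin n) ℝ)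
    (u : (Fin m → ℝ) × (ℝ → Fin n → ℝ)) :
    (Fin m → ℝ) × (ℝ → Fin n → ℝ) :=
  (P.mulVec u.1 + (fun i => ∫ s in a..b, (Q1 s).mulVec (u.2 s) i),
   fun s => (Q2 s).mulVec u.1 + (S s).mulVec (u.2 s)
     + (fun i => ∫ η in a..s, (R1 s η).mulVec (u.2 η) i)
     + (fun i => ∫ η in s..b, (R2 s η).mulVec (u.2 η) i))

/-- The inner product on `X = ℝ^m × L²([a,b];ℝⁿ)`:
`⟨(x₁,x₂),(z₁,z₂)⟩_X = x₁ᵀz₁ + ∫ₐᵇ x₂(s)ᵀ z₂(s) ds`. -/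
def innerX (a b : ℝ) {m n : ℕ}
    (u v : (Fin m → ℝ) × (ℝ → Fin n → ℝ)) : ℝ :=
  u.1 ⬝ᵥ v.1 + ∫ s in a..b, u.2 s ⬝ᵥ v.2 s

/-- `z ∈ L²([a,b];ℝⁿ)`. -/
def MemL2 (a b : ℝ) {n : ℕ} (z : ℝ → Fin n → ℝ) : Prop :=
  MemLp z 2 (volume.restrict (Icc a b))

/-- A bounded measurable matrix-valued function on `[a,b]`. -/
def BddMeas (a b : ℝ) {k l : ℕ} (F : ℝ → Matrix (Fin k) (Fin l) ℝ) : Prop :=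
  (∀ i j, Measurable fun s => F s i j) ∧
    ∃ C, ∀ s ∈ Icc a b, ∀ i j, |F s i j| ≤ C

/-- A bounded measurable matrix-valued kernel on `[a,b] × [a,b]`. -/
def BddMeas2 (a b : ℝ) {k l : ℕ} (F : ℝ → ℝ → Matrix (Fin k) (Fin l) ℝ) : Prop :=
  (∀ i j, Measurable fun p : ℝ × ℝ => F p.1 p.2 i j) ∧
    ∃ C, ∀ s ∈ Icc a b, ∀ η ∈ Icc a b, ∀ i j, |F s η i j| ≤ C

/-- Entrywise integral of a matrix-valued function. -/
def mInt {k l : ℕ} (c d : ℝ) (F : ℝ → Matrix (Fin k) (Fin l) ℝ) :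
    Matrix (Fin k) (Fin l) ℝ :=
  Matrix.of fun i j => ∫ t in c..d, F t i j

/-! The terms carrying `P`, `Q₁`, `Q₂` and `S` match after moving transposes across dot products
and pulling constant vectors through the integrals. The content lies in the two Volterra terms:
`∫ₐᵇ x(s) ⬝ ∫ₐˢ K(s,η) y(η) dη ds` is the integral of `x(s) ⬝ K(s,η) y(η)` over the triangle
`η ≤ s` of `[a,b]²`, so Fubini turns it into `∫ₐᵇ (∫ₛᵇ K(η,s)ᵀ x(η) dη) ⬝ y(s) ds`; the upper
Volterra term is the same identity with `x` and `y` exchanged. The integrand is integrable on the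
square because `K` is bounded and `L²([a,b]) ⊆ L¹([a,b])`. -/

open Function

theorem transpose_mulVec_dotProduct {ι κ : Type*} [Fintype ι] [Fintype κ]
    (A : Matrix ι κ ℝ) (x : ι → ℝ) (y : κ → ℝ) : Aᵀ *ᵥ x ⬝ᵥ y = x ⬝ᵥ A *ᵥ y := by
  rw [dotProduct_comm, dotProduct_transpose_mulVec]

theorem dotProduct_mulVec_eq_sum {ι κ : Type*} [Fintype ι] [Fintype κ]
    (x : ι → ℝ) (A : Matrix ι κ ℝ) (y : κ → ℝ) :
    x ⬝ᵥ A *ᵥ y = ∑ i, ∑ j, A i j * (x i * y j) := by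
  simp only [dotProduct, mulVec, Finset.mul_sum]
  exact Finset.sum_congr rfl fun i _ => Finset.sum_congr rfl fun j _ => by ring

section BoundedKernels

variable {α ι κ : Type*} [MeasurableSpace α] {μ : Measure α} [Fintype κ]
  {M : α → Matrix ι κ ℝ} {C : ℝ}

theorem integrable_mulVec_apply_of_bound (hM : ∀ i j, AEStronglyMeasurable (fun x => M x i j) μ)
    (hC : ∀ᵐ x ∂μ, ∀ i j, |M x i j| ≤ C) {v : α → κ → ℝ}
    (hv : ∀ j, Integrable (fun x => v x j) μ) (i : ι) :
    Integrable (fun x => (M x *ᵥ v x) i) μ :=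
  integrable_finsetSum _ fun j _ =>
    (hv j).bdd_mul (hM i j) (hC.mono fun x hx => by simpa [Real.norm_eq_abs] using hx i j)

theorem integrable_dotProduct_mulVec_of_bound [Fintype ι]
    (hM : ∀ i j, AEStronglyMeasurable (fun x => M x i j) μ)
    (hC : ∀ᵐ x ∂μ, ∀ i j, |M x i j| ≤ C) {u : α → ι → ℝ} {v : α → κ → ℝ}
    (huv : ∀ i j, Integrable (fun x => u x i * v x j) μ) :
    Integrable (fun x => u x ⬝ᵥ M x *ᵥ v x) μ := by
  simp only [dotProduct_mulVec_eq_sum]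
  exact integrable_finsetSum _ fun i _ => integrable_finsetSum _ fun j _ =>
    (huv i j).bdd_mul (hM i j) (hC.mono fun x hx => by simpa [Real.norm_eq_abs] using hx i j)

end BoundedKernels

theorem dotProduct_intervalIntegral {ι : Type*} [Fintype ι] {μ : Measure ℝ} {c d : ℝ}
    (x : ι → ℝ) {h : ℝ → ι → ℝ} (hh : ∀ i, IntervalIntegrable (fun t => h t i) μ c d) :
    x ⬝ᵥ (fun i => ∫ t in c..d, h t i ∂μ) = ∫ t in c..d, x ⬝ᵥ h t ∂μ := by
  simp only [dotProduct]
  rw [intervalIntegral.integral_finsetSum fun i _ => (hh i).const_mul (x i)]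
  simp only [intervalIntegral.integral_const_mul]

theorem intervalIntegral_add_add_add {μ : Measure ℝ} {c d : ℝ} {f₁ f₂ f₃ f₄ : ℝ → ℝ}
    (h₁ : IntervalIntegrable f₁ μ c d) (h₂ : IntervalIntegrable f₂ μ c d)
    (h₃ : IntervalIntegrable f₃ μ c d) (h₄ : IntervalIntegrable f₄ μ c d) :
    ∫ t in c..d, f₁ t + f₂ t + f₃ t + f₄ t ∂μ
      = (∫ t in c..d, f₁ t ∂μ) + (∫ t in c..d, f₂ t ∂μ) + (∫ t in c..d, f₃ t ∂μ)
        + ∫ t in c..d, f₄ t ∂μ := by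
  rw [intervalIntegral.integral_add ((h₁.add h₂).add h₃) h₄,
    intervalIntegral.integral_add (h₁.add h₂) h₃, intervalIntegral.integral_add h₁ h₂]

section Triangle

variable {a b : ℝ} {F : ℝ → ℝ → ℝ}

theorem setIntegral_Icc_indicator_Iic {s : ℝ} (hs : s ∈ Icc a b) (G : ℝ → ℝ) :
    ∫ η in Icc a b, (Iic s).indicator G η = ∫ η in a..s, G η := by
  have hset : Iic s ∩ Icc a b = Icc a s := by
    ext η
    simp only [mem_inter_iff, mem_Iic, mem_Icc]
    exact ⟨fun h => ⟨h.2.1, h.1⟩, fun h => ⟨h.2, h.1, h.2.trans hs.2⟩⟩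
  rw [integral_indicator measurableSet_Iic, Measure.restrict_restrict measurableSet_Iic, hset,
    intervalIntegral.integral_of_le hs.1, integral_Icc_eq_integral_Ioc]

theorem setIntegral_Icc_indicator_Ici {s : ℝ} (hs : s ∈ Icc a b) (G : ℝ → ℝ) :
    ∫ η in Icc a b, (Ici s).indicator G η = ∫ η in s..b, G η := by
  have hset : Ici s ∩ Icc a b = Icc s b := by
    ext η
    simp only [mem_inter_iff, mem_Ici, mem_Icc]
    exact ⟨fun h => ⟨h.1, h.2.2⟩, fun h => ⟨h.1, hs.1.trans h.1, h.2⟩⟩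
  rw [integral_indicator measurableSet_Ici, Measure.restrict_restrict measurableSet_Ici, hset,
    intervalIntegral.integral_of_le hs.2, integral_Icc_eq_integral_Ioc]

theorem integrable_indicator_lowerTriangle (hF : IntegrableOn (uncurry F) (Icc a b ×ˢ Icc a b)) :
    Integrable ({p : ℝ × ℝ | p.2 ≤ p.1}.indicator (uncurry F))
      ((volume.restrict (Icc a b)).prod (volume.restrict (Icc a b))) := by
  rw [Measure.prod_restrict, ← Measure.volume_eq_prod]
  exact hF.indicator (measurableSet_le measurable_snd measurable_fst)

theorem setIntegral_indicator_lowerTriangle_left {s : ℝ} (hs : s ∈ Icc a b) :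
    ∫ η in Icc a b, {p : ℝ × ℝ | p.2 ≤ p.1}.indicator (uncurry F) (s, η) = ∫ η in a..s, F s η := by
  rw [← setIntegral_Icc_indicator_Iic hs]
  simp [indicator_apply]

theorem setIntegral_indicator_lowerTriangle_right {s : ℝ} (hs : s ∈ Icc a b) :
    ∫ η in Icc a b, {p : ℝ × ℝ | p.2 ≤ p.1}.indicator (uncurry F) (η, s) = ∫ η in s..b, F η s := by
  rw [← setIntegral_Icc_indicator_Ici hs]
  simp [indicator_apply]

theorem intervalIntegrable_integral_lower (hab : a ≤ b)
    (hF : IntegrableOn (uncurry F) (Icc a b ×ˢ Icc a b)) :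
    IntervalIntegrable (fun s => ∫ η in a..s, F s η) volume a b := by
  refine IntegrableOn.intervalIntegrable ?_
  rw [uIcc_of_le hab]
  exact (integrable_indicator_lowerTriangle hF).integral_prod_left.congr
    (ae_restrict_of_forall_mem measurableSet_Icc fun s hs =>
      setIntegral_indicator_lowerTriangle_left hs)

theorem intervalIntegrable_integral_upper (hab : a ≤ b)
    (hF : IntegrableOn (uncurry F) (Icc a b ×ˢ Icc a b)) :
    IntervalIntegrable (fun s => ∫ η in s..b, F η s) volume a b := by
  refine IntegrableOn.intervalIntegrable ?_
  rw [uIcc_of_le hab]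
  exact (integrable_indicator_lowerTriangle hF).integral_prod_right.congr
    (ae_restrict_of_forall_mem measurableSet_Icc fun s hs =>
      setIntegral_indicator_lowerTriangle_right hs)

theorem integral_integral_lower_eq_integral_integral_upper (hab : a ≤ b)
    (hF : IntegrableOn (uncurry F) (Icc a b ×ˢ Icc a b)) :
    ∫ s in a..b, ∫ η in a..s, F s η = ∫ s in a..b, ∫ η in s..b, F η s := by
  simp only [intervalIntegral.integral_of_le hab, ← integral_Icc_eq_integral_Ioc]
  rw [← setIntegral_congr_fun measurableSet_Icc
      fun s hs => setIntegral_indicator_lowerTriangle_left hs,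
    ← setIntegral_congr_fun measurableSet_Icc
      fun s hs => setIntegral_indicator_lowerTriangle_right hs]
  exact (integral_integral_swap
    (f := fun s η => {p : ℝ × ℝ | p.2 ≤ p.1}.indicator (uncurry F) (η, s))
    (integrable_indicator_lowerTriangle hF).swap).symm

end Triangle

section BddMeas

variable {a b : ℝ} {k l : ℕ}

theorem MemL2.integrableOn_apply {z : ℝ → Fin k → ℝ} (hz : MemL2 a b z) (i : Fin k) :
    IntegrableOn (fun s => z s i) (Icc a b) :=
  (memLp_pi_iff.1 hz i).integrable one_le_two

theorem MemL2.integrableOn_apply_mul_apply {f : ℝ → Fin k → ℝ} {g : ℝ → Fin l → ℝ}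
    (hf : MemL2 a b f) (hg : MemL2 a b g) (i : Fin k) (j : Fin l) :
    IntegrableOn (fun s => f s i * g s j) (Icc a b) :=
  (memLp_pi_iff.1 hf i).integrable_mul (memLp_pi_iff.1 hg j)

theorem BddMeas.transpose {M : ℝ → Matrix (Fin k) (Fin l) ℝ} (hM : BddMeas a b M) :
    BddMeas a b fun s => (M s)ᵀ := by
  obtain ⟨hm, C, hC⟩ := hM
  exact ⟨fun i j => hm j i, C, fun s hs i j => hC s hs j i⟩

theorem BddMeas2.apply_left {K : ℝ → ℝ → Matrix (Fin k) (Fin l) ℝ} (hK : BddMeas2 a b K)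
    {s : ℝ} (hs : s ∈ Icc a b) : BddMeas a b (K s) := by
  obtain ⟨hm, C, hC⟩ := hK
  exact ⟨fun i j => (hm i j).comp measurable_prodMk_left, C, fun η hη => hC s hs η hη⟩

theorem BddMeas2.apply_right {K : ℝ → ℝ → Matrix (Fin k) (Fin l) ℝ} (hK : BddMeas2 a b K)
    {s : ℝ} (hs : s ∈ Icc a b) : BddMeas a b fun η => K η s := by
  obtain ⟨hm, C, hC⟩ := hK
  exact ⟨fun i j => (hm i j).comp measurable_prodMk_right, C, fun η hη => hC η hη s hs⟩

theorem BddMeas2.swap_transpose {K : ℝ → ℝ → Matrix (Fin k) (Fin l) ℝ} (hK : BddMeas2 a b K) :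
    BddMeas2 a b fun s η => (K η s)ᵀ := by
  obtain ⟨hm, C, hC⟩ := hK
  exact ⟨fun i j => (hm j i).comp measurable_swap, C, fun s hs η hη i j => hC η hη s hs j i⟩

variable {M : ℝ → Matrix (Fin k) (Fin l) ℝ}

theorem BddMeas.intervalIntegrable_mulVec_apply (hM : BddMeas a b M) {g : ℝ → Fin l → ℝ}
    (hg : MemL2 a b g) {c d : ℝ} (hcd : uIcc c d ⊆ Icc a b) (i : Fin k) :
    IntervalIntegrable (fun t => (M t *ᵥ g t) i) volume c d := by
  obtain ⟨hm, C, hC⟩ := hM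
  exact IntegrableOn.intervalIntegrable <| IntegrableOn.mono_set
    (integrable_mulVec_apply_of_bound (fun i j => (hm i j).aestronglyMeasurable)
      (ae_restrict_of_forall_mem measurableSet_Icc hC) hg.integrableOn_apply i) hcd

theorem BddMeas.intervalIntegrable_dotProduct_mulVec (hab : a ≤ b) (hM : BddMeas a b M)
    {f : ℝ → Fin k → ℝ} {g : ℝ → Fin l → ℝ} (hf : MemL2 a b f) (hg : MemL2 a b g) :
    IntervalIntegrable (fun s => f s ⬝ᵥ M s *ᵥ g s) volume a b := by
  obtain ⟨hm, C, hC⟩ := hM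
  refine IntegrableOn.intervalIntegrable ?_
  rw [uIcc_of_le hab]
  exact integrable_dotProduct_mulVec_of_bound (fun i j => (hm i j).aestronglyMeasurable)
    (ae_restrict_of_forall_mem measurableSet_Icc hC) (hf.integrableOn_apply_mul_apply hg)

theorem BddMeas.dotProduct_intervalIntegral_mulVec (hM : BddMeas a b M) {g : ℝ → Fin l → ℝ}
    (hg : MemL2 a b g) {c d : ℝ} (hcd : uIcc c d ⊆ Icc a b) (x : Fin k → ℝ) :
    x ⬝ᵥ (fun i => ∫ t in c..d, (M t *ᵥ g t) i) = ∫ t in c..d, x ⬝ᵥ M t *ᵥ g t :=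
  dotProduct_intervalIntegral x (hM.intervalIntegrable_mulVec_apply hg hcd)

theorem BddMeas.intervalIntegral_transpose_mulVec_dotProduct (hM : BddMeas a b M)
    {f : ℝ → Fin k → ℝ} (hf : MemL2 a b f) {c d : ℝ} (hcd : uIcc c d ⊆ Icc a b) (y : Fin l → ℝ) :
    (fun j => ∫ t in c..d, ((M t)ᵀ *ᵥ f t) j) ⬝ᵥ y = ∫ t in c..d, f t ⬝ᵥ M t *ᵥ y := by
  rw [dotProduct_comm, hM.transpose.dotProduct_intervalIntegral_mulVec hf hcd]
  simp only [dotProduct_transpose_mulVec]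

theorem BddMeas2.integrableOn_dotProduct_mulVec {K : ℝ → ℝ → Matrix (Fin k) (Fin l) ℝ}
    (hK : BddMeas2 a b K) {f : ℝ → Fin k → ℝ} {g : ℝ → Fin l → ℝ}
    (hf : MemL2 a b f) (hg : MemL2 a b g) :
    IntegrableOn (uncurry fun s η => f s ⬝ᵥ K s η *ᵥ g η) (Icc a b ×ˢ Icc a b) := by
  obtain ⟨hm, C, hC⟩ := hK
  rw [IntegrableOn, Measure.volume_eq_prod, ← Measure.prod_restrict]
  refine integrable_dotProduct_mulVec_of_bound (C := C)
    (fun i j => (hm i j).aestronglyMeasurable) ?_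
    fun i j => (hf.integrableOn_apply i).mul_prod (hg.integrableOn_apply j)
  rw [Measure.prod_restrict]
  exact ae_restrict_of_forall_mem (measurableSet_Icc.prod measurableSet_Icc)
    fun p hp => hC p.1 hp.1 p.2 hp.2

end BddMeas

section Volterra

variable {a b : ℝ} {k l : ℕ} {K : ℝ → ℝ → Matrix (Fin k) (Fin l) ℝ}
  {f : ℝ → Fin k → ℝ} {g : ℝ → Fin l → ℝ}

theorem BddMeas2.integral_dotProduct_volterra_lower (hab : a ≤ b) (hK : BddMeas2 a b K)
    (hf : MemL2 a b f) (hg : MemL2 a b g) :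
    IntervalIntegrable (fun s => f s ⬝ᵥ fun i => ∫ η in a..s, (K s η *ᵥ g η) i) volume a b ∧
    IntervalIntegrable (fun s => (fun j => ∫ η in s..b, ((K η s)ᵀ *ᵥ f η) j) ⬝ᵥ g s)
      volume a b ∧
    ∫ s in a..b, f s ⬝ᵥ (fun i => ∫ η in a..s, (K s η *ᵥ g η) i)
      = ∫ s in a..b, (fun j => ∫ η in s..b, ((K η s)ᵀ *ᵥ f η) j) ⬝ᵥ g s := by
  have hF := hK.integrableOn_dotProduct_mulVec hf hg
  have lower : EqOn (fun s => f s ⬝ᵥ fun i => ∫ η in a..s, (K s η *ᵥ g η) i)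
      (fun s => ∫ η in a..s, f s ⬝ᵥ K s η *ᵥ g η) (uIcc a b) := fun s hs => by
    rw [uIcc_of_le hab] at hs
    exact (hK.apply_left hs).dotProduct_intervalIntegral_mulVec hg
      (uIcc_subset_Icc (left_mem_Icc.2 hab) hs) (f s)
  have upper : EqOn (fun s => (fun j => ∫ η in s..b, ((K η s)ᵀ *ᵥ f η) j) ⬝ᵥ g s)
      (fun s => ∫ η in s..b, f η ⬝ᵥ K η s *ᵥ g s) (uIcc a b) := fun s hs => by
    rw [uIcc_of_le hab] at hs
    exact (hK.apply_right hs).intervalIntegral_transpose_mulVec_dotProduct hf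
      (uIcc_subset_Icc hs (right_mem_Icc.2 hab)) (g s)
  refine ⟨(intervalIntegrable_integral_lower hab hF).congr (lower.symm.mono uIoc_subset_uIcc),
    (intervalIntegrable_integral_upper hab hF).congr (upper.symm.mono uIoc_subset_uIcc), ?_⟩
  rw [intervalIntegral.integral_congr lower, intervalIntegral.integral_congr upper]
  exact integral_integral_lower_eq_integral_integral_upper hab hF

theorem BddMeas2.integral_dotProduct_volterra_upper (hab : a ≤ b) (hK : BddMeas2 a b K)
    (hf : MemL2 a b f) (hg : MemL2 a b g) :
    IntervalIntegrable (fun s => f s ⬝ᵥ fun i => ∫ η in s..b, (K s η *ᵥ g η) i) volume a b ∧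
    IntervalIntegrable (fun s => (fun j => ∫ η in a..s, ((K η s)ᵀ *ᵥ f η) j) ⬝ᵥ g s)
      volume a b ∧
    ∫ s in a..b, f s ⬝ᵥ (fun i => ∫ η in s..b, (K s η *ᵥ g η) i)
      = ∫ s in a..b, (fun j => ∫ η in a..s, ((K η s)ᵀ *ᵥ f η) j) ⬝ᵥ g s := by
  obtain ⟨hW, hV, hWV⟩ := hK.swap_transpose.integral_dotProduct_volterra_lower hab hg hf
  simp only [transpose_transpose] at hV hWV
  refine ⟨by simpa only [dotProduct_comm] using hV, by simpa only [dotProduct_comm] using hW, ?_⟩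
  simpa only [dotProduct_comm] using hWV.symm

end Volterra

/-- The operator `𝒫_{P̂,Q̂₁,Q̂₂,Ŝ,R̂₁,R̂₂}` with `P̂ = Pᵀ`,
`Q̂₁(s) = Q₂(s)ᵀ`, `Q̂₂(s) = Q₁(s)ᵀ`, `Ŝ(s) = S(s)ᵀ`, `R̂₁(s,η) = R₂(η,s)ᵀ`,
`R̂₂(s,η) = R₁(η,s)ᵀ` is the adjoint of `𝒫_{P,Q₁,Q₂,S,R₁,R₂}` with respect to `⟨·,·⟩_X`. -/
theorem adjoint_of_Pop {m n : ℕ} (a b : ℝ) (hab : a < b)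
    (P : Matrix (Fin m) (Fin m) ℝ)
    (Q1 : ℝ → Matrix (Fin m) (Fin n) ℝ)
    (Q2 : ℝ → Matrix (Fin n) (Fin m) ℝ)
    (S : ℝ → Matrix (Fin n) (Fin n) ℝ)
    (R1 R2 : ℝ → ℝ → Matrix (Fin n) (Fin n) ℝ)
    (hQ1 : BddMeas a b Q1) (hQ2 : BddMeas a b Q2) (hS : BddMeas a b S)
    (hR1 : BddMeas2 a b R1) (hR2 : BddMeas2 a b R2) :
    ∀ (x1 : Fin m → ℝ) (x2 : ℝ → Fin n → ℝ) (y1 : Fin m → ℝ) (y2 : ℝ → Fin n → ℝ),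
      MemL2 a b x2 → MemL2 a b y2 →
      innerX a b (x1, x2) (Pop a b P Q1 Q2 S R1 R2 (y1, y2))
        = innerX a b
            (Pop a b Pᵀ (fun s => (Q2 s)ᵀ) (fun s => (Q1 s)ᵀ) (fun s => (S s)ᵀ)
              (fun s η => (R2 η s)ᵀ) (fun s η => (R1 η s)ᵀ) (x1, x2))
            (y1, y2) := by
  intro x1 x2 y1 y2 hx2 hy2
  have huIcc : uIcc a b ⊆ Icc a b := (uIcc_of_le hab.le).subset
  have hconst : ∀ v : Fin m → ℝ, MemL2 a b fun _ => v := fun v => memLp_const v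
  obtain ⟨hV1, hW1, hVW1⟩ := hR1.integral_dotProduct_volterra_lower hab.le hx2 hy2
  obtain ⟨hV2, hW2, hVW2⟩ := hR2.integral_dotProduct_volterra_upper hab.le hx2 hy2
  have hQ2y := hQ2.intervalIntegrable_dotProduct_mulVec hab.le hx2 (hconst y1)
  have hSy := hS.intervalIntegrable_dotProduct_mulVec hab.le hx2 hy2
  have hQ1y := hQ1.intervalIntegrable_dotProduct_mulVec hab.le (hconst x1) hy2
  simp only [innerX, Pop, dotProduct_add, add_dotProduct, transpose_mulVec_dotProduct]
  rw [intervalIntegral_add_add_add hQ2y hSy hV1 hV2, intervalIntegral_add_add_add hQ1y hSy hW2 hW1,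
    hQ1.dotProduct_intervalIntegral_mulVec hy2 huIcc x1,
    hQ2.intervalIntegral_transpose_mulVec_dotProduct hx2 huIcc y1, hVW1, hVW2]
  ring

end
end

section
/- Let z ∈ W^{2,2}([a,b];ℝ^{n_p}) satisfy the boundary condition B_c z_b = 0, where B_c ∈ ℝ^{2n_p×4n_p} has full row rank and B_c B_d is invertible. Then for every s ∈ [a,b], z(s) = ∫ₐˢ G₁(s,η) z_ss(η) dη + ∫ₛᵇ G₂(s,η) z_ss(η) dη. -/
open MeasureTheory Matrix Set

noncomputable section

/-- The block matrix `B_d ∈ ℝ^{4n_p × 2n_p}` with block rows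
`[I, 0]`, `[I, (b−a)I]`, `[0, I]`, `[0, I]`. -/
def Bdm (a b : ℝ) (np : ℕ) : Matrix (Fin 4 × Fin np) (Fin 2 × Fin np) ℝ :=
  Matrix.of fun p q =>
    (![![(1 : Matrix (Fin np) (Fin np) ℝ), 0],
       ![1, (b - a) • 1],
       ![0, 1],
       ![0, 1]] p.1 q.1) p.2 q.2

/-- The block column `col(0, (b−η)I, 0, I) ∈ ℝ^{4n_p × n_p}`. -/
def colE (b : ℝ) (np : ℕ) (η : ℝ) : Matrix (Fin 4 × Fin np) (Fin np) ℝ :=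
  Matrix.of fun p j =>
    (![(0 : Matrix (Fin np) (Fin np) ℝ), (b - η) • 1, 0, 1] p.1) p.2 j

/-- `B_f(η) = (B_c B_d)⁻¹ B_c col(0,(b−η)I,0,I)`. -/
def Bfm (a b : ℝ) {np : ℕ}
    (Bc : Matrix (Fin 2 × Fin np) (Fin 4 × Fin np) ℝ) (η : ℝ) :
    Matrix (Fin 2 × Fin np) (Fin np) ℝ :=
  (Bc * Bdm a b np)⁻¹ * Bc * colE b np η

/-- The block row `[I, (s−a)I] ∈ ℝ^{n_p × 2n_p}`. -/
def rowIA (a : ℝ) (np : ℕ) (s : ℝ) : Matrix (Fin np) (Fin 2 × Fin np) ℝ :=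
  Matrix.of fun i q => (![(1 : Matrix (Fin np) (Fin np) ℝ), (s - a) • 1] q.1) i q.2

/-- The block row `[0, I] ∈ ℝ^{n_p × 2n_p}`. -/
def rowZI (np : ℕ) : Matrix (Fin np) (Fin 2 × Fin np) ℝ :=
  Matrix.of fun i q => (![(0 : Matrix (Fin np) (Fin np) ℝ), 1] q.1) i q.2

/-- `B_a(s,η) = −[I,(s−a)I] B_f(η)`. -/
def Bam (a b : ℝ) {np : ℕ}
    (Bc : Matrix (Fin 2 × Fin np) (Fin 4 × Fin np) ℝ) (s η : ℝ) :
    Matrix (Fin np) (Fin np) ℝ :=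
  -(rowIA a np s * Bfm a b Bc η)

/-- `B_b(η) = −[0,I] B_f(η)`. -/
def Bbm (a b : ℝ) {np : ℕ}
    (Bc : Matrix (Fin 2 × Fin np) (Fin 4 × Fin np) ℝ) (η : ℝ) :
    Matrix (Fin np) (Fin np) ℝ :=
  -(rowZI np * Bfm a b Bc η)

/-- `G₁(s,η) = B_a(s,η) + (s−η)I`. -/
def G1m (a b : ℝ) {np : ℕ}
    (Bc : Matrix (Fin 2 × Fin np) (Fin 4 × Fin np) ℝ) (s η : ℝ) :
    Matrix (Fin np) (Fin np) ℝ :=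
  Bam a b Bc s η + (s - η) • 1

/-- `G₂(s,η) = B_a(s,η)`. -/
def G2m (a b : ℝ) {np : ℕ}
    (Bc : Matrix (Fin 2 × Fin np) (Fin 4 × Fin np) ℝ) (s η : ℝ) :
    Matrix (Fin np) (Fin np) ℝ :=
  Bam a b Bc s η

/-- `G₃(s,η) = B_b(η) + I`. -/
def G3m (a b : ℝ) {np : ℕ}
    (Bc : Matrix (Fin 2 × Fin np) (Fin 4 × Fin np) ℝ) (_s η : ℝ) :
    Matrix (Fin np) (Fin np) ℝ :=
  Bbm a b Bc η + 1

/-- `G₄(s,η) = B_b(η)`. -/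
def G4m (a b : ℝ) {np : ℕ}
    (Bc : Matrix (Fin 2 × Fin np) (Fin 4 × Fin np) ℝ) (_s η : ℝ) :
    Matrix (Fin np) (Fin np) ℝ :=
  Bbm a b Bc η

/-- The boundary vector `z_b = col(z(a), z(b), z_s(a), z_s(b)) ∈ ℝ^{4n_p}`. -/
def zbv (a b : ℝ) {np : ℕ} (z zs : ℝ → Fin np → ℝ) : Fin 4 × Fin np → ℝ :=
  fun p => ![z a, z b, zs a, zs b] p.1 p.2

/-!
Taylor's formula with integral remainder gives
`z(s) = z(a) + (s - a) z_s(a) + ∫ₐˢ (s - η) z_ss(η) dη`; at `s = b`, together with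
`z_s(b) = z_s(a) + ∫ₐᵇ z_ss`, it writes
`z_b = B_d col(z(a), z_s(a)) + ∫ₐᵇ col(0, (b - η)I, 0, I) z_ss(η) dη`.
Since `B_c B_d` is invertible, the boundary condition `B_c z_b = 0` determines the initial data:
`col(z(a), z_s(a)) = -∫ₐᵇ B_f(η) z_ss(η) dη`, hence
`z(a) + (s - a) z_s(a) = ∫ₐᵇ B_a(s, η) z_ss(η) dη`. Splitting this integral at `s` and adding the
Taylor remainder produces the kernels `G₁` on `[a, s]` and `G₂` on `[s, b]`.
-/

section Calculus

variable {E : Type*} [NormedAddCommGroup E] [NormedSpace ℝ E] [CompleteSpace E]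

theorem integral_eq_sub_of_hasDerivWithinAt_Icc {f f' : ℝ → E} {a b : ℝ} (hab : a ≤ b)
    (hf : ∀ x ∈ Icc a b, HasDerivWithinAt f (f' x) (Icc a b) x)
    (hint : IntervalIntegrable f' volume a b) :
    ∫ x in a..b, f' x = f b - f a :=
  intervalIntegral.integral_eq_sub_of_hasDeriv_right_of_le hab
    (fun x hx => (hf x hx).continuousWithinAt)
    (fun x hx => ((hf x (Ioo_subset_Icc_self hx)).hasDerivAt
      (Icc_mem_nhds hx.1 hx.2)).hasDerivWithinAt) hint

theorem taylor_integral_remainder_of_hasDerivWithinAt_Icc {f f' f'' : ℝ → E} {a b : ℝ}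
    (hf : ∀ x ∈ Icc a b, HasDerivWithinAt f (f' x) (Icc a b) x)
    (hf' : ∀ x ∈ Icc a b, HasDerivWithinAt f' (f'' x) (Icc a b) x)
    {t : ℝ} (ht : t ∈ Icc a b) (hint : IntervalIntegrable f'' volume a t) :
    f t = f a + (t - a) • f' a + ∫ x in a..t, (t - x) • f'' x := by
  have hsub : Icc a t ⊆ Icc a b := Icc_subset_Icc_right ht.2
  have hderiv : ∀ x ∈ Icc a t, HasDerivWithinAt (fun y => f y + (t - y) • f' y)
      ((t - x) • f'' x) (Icc a t) x := by
    intro x hx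
    refine (((hf x (hsub hx)).mono hsub).add (((hasDerivWithinAt_id x _).const_sub t).smul
      ((hf' x (hsub hx)).mono hsub))).congr_deriv ?_
    simp only [id, sub_smul, neg_smul, one_smul]
    abel
  rw [integral_eq_sub_of_hasDerivWithinAt_Icc ht.1 hderiv
    (hint.continuousOn_smul (by fun_prop))]
  simp only [sub_self, zero_smul, add_zero]
  abel

end Calculus

section Pi

variable {ι : Type*} [Fintype ι] {f : ℝ → ι → ℝ} {c d : ℝ}

theorem IntervalIntegrable.eval (hf : IntervalIntegrable f volume c d) (i : ι) :
    IntervalIntegrable (fun x => f x i) volume c d :=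
  intervalIntegrable_iff.mpr (Integrable.eval (intervalIntegrable_iff.mp hf) i)

theorem intervalIntegral.eval_integral (hf : IntervalIntegrable f volume c d) (i : ι) :
    (∫ x in c..d, f x) i = ∫ x in c..d, f x i :=
  ((ContinuousLinearMap.proj (R := ℝ) (φ := fun _ : ι => ℝ) i).intervalIntegral_comp_comm hf).symm

end Pi

section MatrixIntegral

variable {m n : Type*} [Fintype m] [Fintype n] {c d : ℝ}

theorem IntervalIntegrable.matrix_mulVec {M : ℝ → Matrix m n ℝ} {f : ℝ → n → ℝ}
    (hf : IntervalIntegrable f volume c d) (hM : ContinuousOn M (uIcc c d)) :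
    IntervalIntegrable (fun x => M x *ᵥ f x) volume c d := by
  have hsum : (fun x => M x *ᵥ f x) = ∑ j, fun x => f x j • fun i => M x i j := by
    ext x i
    simp [Matrix.mulVec, dotProduct, mul_comm]
  rw [hsum]
  exact IntervalIntegrable.sum _ fun j _ => (hf.eval j).smul_continuousOn
    (continuousOn_pi.mpr fun i => (continuous_apply_apply i j).comp_continuousOn hM)

theorem Matrix.mulVec_intervalIntegral (M : Matrix m n ℝ) {f : ℝ → n → ℝ}
    (hf : IntervalIntegrable f volume c d) :
    M *ᵥ ∫ x in c..d, f x = ∫ x in c..d, M *ᵥ f x :=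
  ((Matrix.mulVecLin M).toContinuousLinearMap.intervalIntegral_comp_comm hf).symm

end MatrixIntegral

theorem Matrix.eq_neg_mulVec_of_mulVec_mulVec_add_eq_zero {R k m : Type*} [CommRing R]
    [Fintype m] [DecidableEq k] [Fintype k] {A : Matrix k m R} {D : Matrix m k R}
    (hAD : IsUnit (A * D).det) {v : k → R} {w : m → R} (h : A *ᵥ (D *ᵥ v + w) = 0) :
    v = -(((A * D)⁻¹ * A) *ᵥ w) := by
  rw [mulVec_add, mulVec_mulVec] at h
  calc v = (A * D)⁻¹ *ᵥ ((A * D) *ᵥ v) := by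
        rw [mulVec_mulVec, nonsing_inv_mul _ hAD, one_mulVec]
    _ = -(((A * D)⁻¹ * A) *ᵥ w) := by
        rw [eq_neg_of_add_eq_zero_left h, mulVec_neg, mulVec_mulVec]

section Blocks

variable {np : ℕ}

theorem Bdm_mulVec (a b : ℝ) (x y : Fin np → ℝ) :
    Bdm a b np *ᵥ (fun q => ![x, y] q.1 q.2) =
      fun p => ![x, x + (b - a) • y, y, y] p.1 p.2 := by
  ext ⟨k, i⟩
  fin_cases k <;> simp [Bdm, mulVec, dotProduct, Fintype.sum_prod_type, Matrix.one_apply]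

theorem colE_mulVec (b η : ℝ) (x : Fin np → ℝ) :
    colE b np η *ᵥ x = fun p => ![0, (b - η) • x, 0, x] p.1 p.2 := by
  ext ⟨k, i⟩
  fin_cases k <;> simp [colE, mulVec, dotProduct, Matrix.one_apply]

theorem rowIA_mulVec (a s : ℝ) (x y : Fin np → ℝ) :
    rowIA a np s *ᵥ (fun q => ![x, y] q.1 q.2) = x + (s - a) • y := by
  ext i
  simp [rowIA, mulVec, dotProduct, Fintype.sum_prod_type, Matrix.one_apply]

theorem continuous_colE (b : ℝ) : Continuous (colE b np) := by
  refine continuous_pi fun ⟨k, i⟩ => continuous_pi fun j => ?_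
  fin_cases k <;> simp [colE] <;> fun_prop

theorem continuous_Bfm (a b : ℝ) (Bc : Matrix (Fin 2 × Fin np) (Fin 4 × Fin np) ℝ) :
    Continuous (Bfm a b Bc) :=
  continuous_const.matrix_mul (continuous_colE b)

theorem continuous_Bam (a b : ℝ) (Bc : Matrix (Fin 2 × Fin np) (Fin 4 × Fin np) ℝ) (s : ℝ) :
    Continuous (Bam a b Bc s) :=
  (continuous_const.matrix_mul (continuous_Bfm a b Bc)).neg

theorem continuous_G1m (a b : ℝ) (Bc : Matrix (Fin 2 × Fin np) (Fin 4 × Fin np) ℝ) (s : ℝ) :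
    Continuous (G1m a b Bc s) :=
  (continuous_Bam a b Bc s).add ((continuous_const.sub continuous_id).smul continuous_const)

theorem integral_colE_mulVec (b : ℝ) {f : ℝ → Fin np → ℝ} {c d : ℝ}
    (hf : IntervalIntegrable f volume c d) :
    ∫ x in c..d, colE b np x *ᵥ f x =
      fun p => ![0, ∫ x in c..d, (b - x) • f x, 0, ∫ x in c..d, f x] p.1 p.2 := by
  ext ⟨k, i⟩
  rw [intervalIntegral.eval_integral (hf.matrix_mulVec (continuous_colE b).continuousOn)]
  simp only [colE_mulVec]
  fin_cases k
  · simp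
  · simp [intervalIntegral.eval_integral (hf.continuousOn_smul (f := fun x => b - x)
      (by fun_prop))]
  · simp
  · simp [intervalIntegral.eval_integral hf]

end Blocks

section BoundaryValueProblem

variable {np : ℕ} {a b : ℝ} {z zs zss : ℝ → Fin np → ℝ}

theorem zbv_eq_Bdm_mulVec_add_integral (hab : a ≤ b)
    (hz : ∀ s ∈ Icc a b, HasDerivWithinAt z (zs s) (Icc a b) s)
    (hzs : ∀ s ∈ Icc a b, HasDerivWithinAt zs (zss s) (Icc a b) s)
    (hint : IntervalIntegrable zss volume a b) :
    zbv a b z zs = Bdm a b np *ᵥ (fun q => ![z a, zs a] q.1 q.2) +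
      ∫ η in a..b, colE b np η *ᵥ zss η := by
  have hb : b ∈ Icc a b := right_mem_Icc.mpr hab
  have hzb := taylor_integral_remainder_of_hasDerivWithinAt_Icc hz hzs hb hint
  have hzsb := integral_eq_sub_of_hasDerivWithinAt_Icc hab hzs hint
  rw [Bdm_mulVec, integral_colE_mulVec b hint, hzsb]
  ext ⟨k, i⟩
  fin_cases k <;> simp [zbv, hzb]

theorem add_smul_eq_integral_Bam (hab : a ≤ b)
    (hz : ∀ s ∈ Icc a b, HasDerivWithinAt z (zs s) (Icc a b) s)
    (hzs : ∀ s ∈ Icc a b, HasDerivWithinAt zs (zss s) (Icc a b) s)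
    (hint : IntervalIntegrable zss volume a b)
    {Bc : Matrix (Fin 2 × Fin np) (Fin 4 × Fin np) ℝ} (hdet : IsUnit (Bc * Bdm a b np).det)
    (hbc : Bc *ᵥ zbv a b z zs = 0) (s : ℝ) :
    z a + (s - a) • zs a = ∫ η in a..b, Bam a b Bc s η *ᵥ zss η := by
  rw [zbv_eq_Bdm_mulVec_add_integral hab hz hzs hint] at hbc
  have hBf : ∀ η, ((Bc * Bdm a b np)⁻¹ * Bc) *ᵥ (colE b np η *ᵥ zss η) =
      Bfm a b Bc η *ᵥ zss η := fun η => mulVec_mulVec _ _ _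
  rw [← rowIA_mulVec a s, Matrix.eq_neg_mulVec_of_mulVec_mulVec_add_eq_zero hdet hbc,
    Matrix.mulVec_intervalIntegral _ (hint.matrix_mulVec (continuous_colE b).continuousOn)]
  simp only [hBf]
  rw [mulVec_neg, Matrix.mulVec_intervalIntegral _
      (hint.matrix_mulVec (continuous_Bfm a b Bc).continuousOn),
    ← intervalIntegral.integral_neg]
  simp only [mulVec_mulVec, Bam, neg_mulVec]

end BoundaryValueProblem

theorem z_from_zss_general {np : ℕ} (a b : ℝ) (hab : a < b)
    (z zs zss : ℝ → Fin np → ℝ)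
    (hz : ∀ s ∈ Icc a b, HasDerivWithinAt z (zs s) (Icc a b) s)
    (hzs : ∀ s ∈ Icc a b, HasDerivWithinAt zs (zss s) (Icc a b) s)
    (hzss : MemLp zss 2 (volume.restrict (Icc a b)))
    (Bc : Matrix (Fin 2 × Fin np) (Fin 4 × Fin np) ℝ)
    (hdet : IsUnit (Bc * Bdm a b np).det)
    (hbc : Bc.mulVec (zbv a b z zs) = 0) :
    ∀ s ∈ Icc a b,
      z s = (fun i => ∫ η in a..s, (G1m a b Bc s η).mulVec (zss η) i)
          + (fun i => ∫ η in s..b, (G2m a b Bc s η).mulVec (zss η) i) := by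
  intro s hs
  have ha : a ∈ Icc a b := left_mem_Icc.mpr hab.le
  have hb : b ∈ Icc a b := right_mem_Icc.mpr hab.le
  have hzss_on : IntegrableOn zss (Icc a b) := hzss.integrable one_le_two
  have hint : ∀ {c d}, c ∈ Icc a b → d ∈ Icc a b → IntervalIntegrable zss volume c d :=
    fun hc hd => (hzss_on.mono_set (uIcc_subset_Icc hc hd)).intervalIntegrable
  have hint_mulVec : ∀ {M : ℝ → Matrix (Fin np) (Fin np) ℝ}, Continuous M →
      ∀ {c d}, c ∈ Icc a b → d ∈ Icc a b →
        IntervalIntegrable (fun η => M η *ᵥ zss η) volume c d :=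
    fun hM _ _ hc hd => (hint hc hd).matrix_mulVec hM.continuousOn
  have hgreen : z s = (∫ η in a..s, G1m a b Bc s η *ᵥ zss η) +
      ∫ η in s..b, G2m a b Bc s η *ᵥ zss η := by
    rw [taylor_integral_remainder_of_hasDerivWithinAt_Icc hz hzs hs (hint ha hs),
      add_smul_eq_integral_Bam hab.le hz hzs (hint ha hb) hdet hbc s,
      ← intervalIntegral.integral_add_adjacent_intervals
        (hint_mulVec (continuous_Bam a b Bc s) ha hs) (hint_mulVec (continuous_Bam a b Bc s) hs hb)]
    simp only [G1m, G2m, add_mulVec, smul_mulVec, one_mulVec]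
    rw [intervalIntegral.integral_add (hint_mulVec (continuous_Bam a b Bc s) ha hs)
      ((hint ha hs).continuousOn_smul (f := fun η => s - η) (by fun_prop))]
    abel
  rw [hgreen]
  congr 1 <;> ext i
  · exact intervalIntegral.eval_integral (hint_mulVec (continuous_G1m a b Bc s) ha hs) i
  · exact intervalIntegral.eval_integral (hint_mulVec (continuous_Bam a b Bc s) hs hb) i

/-- If `z ∈ W^{2,2}([a,b];ℝ^{n_p})` satisfies the boundary condition
`B_c z_b = 0` with `B_c` of full row rank and `B_c B_d` invertible, then
`z(s) = ∫ₐˢ G₁(s,η) z_ss(η) dη + ∫ₛᵇ G₂(s,η) z_ss(η) dη` for every `s ∈ [a,b]`. -/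
theorem z_from_zss {np : ℕ} (a b : ℝ) (hab : a < b)
    (z zs zss : ℝ → Fin np → ℝ)
    (hz : ∀ s ∈ Icc a b, HasDerivWithinAt z (zs s) (Icc a b) s)
    (hzs : ∀ s ∈ Icc a b, HasDerivWithinAt zs (zss s) (Icc a b) s)
    (hzss : MemLp zss 2 (volume.restrict (Icc a b)))
    (Bc : Matrix (Fin 2 × Fin np) (Fin 4 × Fin np) ℝ)
    (hrank : Bc.rank = Fintype.card (Fin 2 × Fin np))
    (hdet : IsUnit (Bc * Bdm a b np).det)
    (hbc : Bc.mulVec (zbv a b z zs) = 0) :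
    ∀ s ∈ Icc a b,
      z s = (fun i => ∫ η in a..s, (G1m a b Bc s η).mulVec (zss η) i)
          + (fun i => ∫ η in s..b, (G2m a b Bc s η).mulVec (zss η) i) :=
  z_from_zss_general a b hab z zs zss hz hzs hzss Bc hdet hbc
end
end
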